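/- arXiv:math/0212153 — 3 statements merged into one kernel-verified Lean document; each statement's English description precedes it below -/
import Mathlib

section
/- Suppose [y_α, y_β] = -N y_{α+β} and y_{α+β} commutes with y_α and y_β. Then for all integers m ≥ 0 and n ≥ 0, y_β^m y_α^n = Σ_{k=0}^{m} N^k C(m,k) C(n,k) k! · y_α^{n-k} y_β^{m-k} y_{α+β}^k. -/
/-- Lemma 2 (case (II), nonnegative exponents): in an associative `ℚ`-algebra (such as the
universal enveloping algebra `U(n⁻)`), suppose `[y_α, y_β] = -N y_{α+β}` and `y_{α+β}`
commutes with `y_α` and `y_β`.  Then for all `m, n ≥ 0`,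
`y_β^m y_α^n = Σ_{k=0}^m N^k C(m,k) C(n,k) k! ⬝ y_α^{n-k} y_β^{m-k} y_{α+β}^k`. -/
theorem ybeta_pow_mul_yalpha_pow {A : Type*} [Ring A] [Algebra ℚ A]
    (yα yβ yαβ : A) (N : ℚ)
    (hbr : yα * yβ - yβ * yα = -(N • yαβ))
    (hc1 : yαβ * yα = yα * yαβ) (hc2 : yαβ * yβ = yβ * yαβ) :
    ∀ m n : ℕ,
      yβ ^ m * yα ^ n =
        ∑ k ∈ Finset.range (m + 1),
          ((N ^ k * (m.choose k : ℚ) * (n.choose k : ℚ) * (k.factorial : ℚ)) •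
            (yα ^ (n - k) * yβ ^ (m - k) * yαβ ^ k)) := by
  have hba : yβ * yα = yα * yβ + N • yαβ := by
    have h := hbr
    rw [sub_eq_iff_eq_add] at h
    rw [h]; abel
  have c1 : Commute yαβ yα := hc1
  have c2 : Commute yαβ yβ := hc2
  have key : ∀ n : ℕ, yβ * yα ^ n = yα ^ n * yβ + (((n : ℚ)) * N) • (yα ^ (n - 1) * yαβ) := by
    intro n
    induction n with
    | zero => simp
    | succ n ih =>
      cases n with
      | zero => simp [hba]
      | succ p =>
        have h1 : yβ * yα ^ (p+2) = (yβ * yα ^ (p+1)) * yα := by rw [pow_succ, mul_assoc]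
        rw [h1, ih, add_mul, smul_mul_assoc, mul_assoc (yα ^ (p+1)) yβ yα, hba]
        have h2 : yα ^ (p+1-1) * yαβ * yα = yα ^ (p+1) * yαβ := by
          rw [Nat.add_sub_cancel, mul_assoc, hc1, ← mul_assoc, ← pow_succ]
        rw [h2, mul_add, ← mul_assoc, ← pow_succ, mul_smul_comm, Nat.add_sub_cancel]
        push_cast
        module
  intro m n
  induction m with
  | zero => simp
  | succ m ih =>
    have hL : yβ ^ (m+1) * yα ^ n
        = ∑ k ∈ Finset.range (m+1),
            (((N^k * (m.choose k : ℚ) * (n.choose k : ℚ) * (k.factorial : ℚ)) •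
               (yα ^ (n-k) * yβ ^ (m+1-k) * yαβ ^ k))
             + ((N^k * (m.choose k : ℚ) * (n.choose k : ℚ) * (k.factorial : ℚ) * (((n-k : ℕ)) : ℚ) * N) •
               (yα ^ (n-(k+1)) * yβ ^ (m-k) * yαβ ^ (k+1)))) := by
      have h0 : yβ ^ (m+1) * yα ^ n = yβ * (yβ ^ m * yα ^ n) := by
        rw [pow_succ', mul_assoc]
      rw [h0, ih, Finset.mul_sum]
      refine Finset.sum_congr rfl fun k hk => ?_
      have hkm : k ≤ m := Nat.lt_succ_iff.mp (Finset.mem_range.mp hk)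
      rw [mul_smul_comm]
      have tl : yβ * (yα ^ (n-k) * yβ ^ (m-k) * yαβ ^ k)
          = yα ^ (n-k) * yβ ^ (m+1-k) * yαβ ^ k
            + ((((n-k : ℕ)) : ℚ) * N) • (yα ^ (n-(k+1)) * yβ ^ (m-k) * yαβ ^ (k+1)) := by
        rw [mul_assoc (yα ^ (n-k)), ← mul_assoc yβ, key (n-k), add_mul]
        have e1 : yα ^ (n-k) * yβ * (yβ ^ (m-k) * yαβ ^ k)
            = yα ^ (n-k) * yβ ^ (m+1-k) * yαβ ^ k := by
          rw [mul_assoc (yα ^ (n-k)), ← mul_assoc yβ, ← pow_succ']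
          rw [Nat.succ_sub hkm, ← mul_assoc]
        have e2 : yα ^ (n-k-1) * yαβ * (yβ ^ (m-k) * yαβ ^ k)
            = yα ^ (n-(k+1)) * yβ ^ (m-k) * yαβ ^ (k+1) := by
          rw [mul_assoc (yα ^ (n-k-1)), ← mul_assoc yαβ, (c2.pow_right (m-k)).eq,
            mul_assoc (yβ ^ (m-k)), ← pow_succ', ← mul_assoc, Nat.sub_sub]
        rw [e1, smul_mul_assoc, e2]
      rw [tl, smul_add, smul_smul]
      ring_nf
    rw [hL, Finset.sum_add_distrib]
    have hsplit : ∀ k ∈ Finset.range (m+1),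
        ((N ^ (k+1) * ((m+1).choose (k+1) : ℚ) * (n.choose (k+1) : ℚ) * ((k+1).factorial : ℚ)) •
          (yα ^ (n - (k+1)) * yβ ^ (m + 1 - (k+1)) * yαβ ^ (k+1)))
        = ((N ^ (k+1) * (m.choose (k+1) : ℚ) * (n.choose (k+1) : ℚ) * ((k+1).factorial : ℚ)) •
            (yα ^ (n - (k+1)) * yβ ^ (m + 1 - (k+1)) * yαβ ^ (k+1)))
          + ((N^k * (m.choose k : ℚ) * (n.choose k : ℚ) * (k.factorial : ℚ) * (((n-k : ℕ)) : ℚ) * N) •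
            (yα ^ (n-(k+1)) * yβ ^ (m-k) * yαβ ^ (k+1))) := by
      intro k hk
      have hms : m + 1 - (k+1) = m - k := by omega
      rw [hms, ← add_smul]
      congr 1
      have hch : (n.choose (k+1) : ℚ) * ((k+1) : ℚ) = (n.choose k : ℚ) * (((n-k : ℕ)) : ℚ) := by
        exact_mod_cast congrArg (Nat.cast : ℕ → ℚ) (Nat.choose_succ_right_eq n k)
      have hpas : ((m+1).choose (k+1) : ℚ) = (m.choose k : ℚ) + (m.choose (k+1) : ℚ) := by
        exact_mod_cast congrArg (Nat.cast : ℕ → ℚ) (Nat.choose_succ_succ m k)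
      have hfac : (((k+1).factorial : ℚ)) = ((k.factorial : ℚ)) * ((k+1 : ℕ) : ℚ) := by
        rw [Nat.factorial_succ]; push_cast; ring
      rw [hpas, hfac]
      push_cast
      linear_combination (N^(k+1) * ((m.choose k : ℕ) : ℚ) * ((k.factorial : ℕ) : ℚ)) * hch
    rw [Finset.sum_range_succ' (fun k => (N ^ k * (((m+1).choose k : ℕ) : ℚ) * ((n.choose k : ℕ) : ℚ) * ((k.factorial : ℕ) : ℚ)) • (yα ^ (n - k) * yβ ^ (m + 1 - k) * yαβ ^ k)) (m+1)]
    rw [Finset.sum_congr rfl hsplit, Finset.sum_add_distrib]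
    have hA : (∑ k ∈ Finset.range (m+1),
          (N ^ k * ((m.choose k : ℕ) : ℚ) * ((n.choose k : ℕ) : ℚ) * ((k.factorial : ℕ) : ℚ)) •
            (yα ^ (n - k) * yβ ^ (m + 1 - k) * yαβ ^ k))
        = (∑ k ∈ Finset.range (m+1),
            (N ^ (k+1) * ((m.choose (k+1) : ℕ) : ℚ) * ((n.choose (k+1) : ℕ) : ℚ) * (((k+1).factorial : ℕ) : ℚ)) •
              (yα ^ (n - (k+1)) * yβ ^ (m + 1 - (k+1)) * yαβ ^ (k+1)))
          + (N ^ 0 * ((m.choose 0 : ℕ) : ℚ) * ((n.choose 0 : ℕ) : ℚ) * ((Nat.factorial 0 : ℕ) : ℚ)) •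
              (yα ^ (n - 0) * yβ ^ (m + 1 - 0) * yαβ ^ 0) := by
      have h2 := Finset.sum_range_succ'
        (fun k => (N ^ k * ((m.choose k : ℕ) : ℚ) * ((n.choose k : ℕ) : ℚ) * ((k.factorial : ℕ) : ℚ)) •
          (yα ^ (n - k) * yβ ^ (m + 1 - k) * yαβ ^ k)) (m+1)
      rw [← h2, Finset.sum_range_succ
        (fun k => (N ^ k * ((m.choose k : ℕ) : ℚ) * ((n.choose k : ℕ) : ℚ) * ((k.factorial : ℕ) : ℚ)) •
          (yα ^ (n - k) * yβ ^ (m + 1 - k) * yαβ ^ k)) (m+1)]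
      simp only [Nat.choose_succ_self, Nat.cast_zero, mul_zero, zero_mul, zero_smul, add_zero]
    rw [hA]
    norm_num
    abel
end

section
/- Suppose [y_α,y_β] = -N_{α,β} y_{α+β}, [y_β, y_{α+β}] = -N_{β,α+β} y_{α+2β}, y_{α+2β} is central among these elements, and [y_α, y_{α+β}] = 0. Then for integers m, n ≥ 0: y_β^m y_α^n = Σ_{k,l ≥ 0, k+2l ≤ m} c_{k,l}^{m,n} · y_α^{n-k-l} y_β^{m-k-2l} y_{α+β}^k y_{α+2β}^l, where c_{k,l}^{m,n} = N_{α,β}^{k+l} ( (1/2) N_{β,α+β} )^l C(n,k+l) C(m,k+2l) C(k+l,l) (k+2l)!. -/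
open Finset

/-! ### Auxiliary coefficient lemmas -/

private def ccc (N1 N2 : ℚ) (m n k l : ℕ) : ℚ :=
  N1 ^ (k + l) * ((1/2 : ℚ) * N2) ^ l *
    (n.choose (k + l) : ℚ) * (m.choose (k + 2 * l) : ℚ) *
    ((k + l).choose l : ℚ) * ((k + 2 * l).factorial : ℚ)

private lemma ccc_zero (N1 N2 : ℚ) (m n k l : ℕ) (h : m < k + 2*l) :
    ccc N1 N2 m n k l = 0 := by
  simp [ccc, Nat.choose_eq_zero_of_lt h]

private lemma qchoose_succ_right (n j : ℕ) :
    (n.choose (j+1) : ℚ) * ((j:ℚ)+1) = (n.choose j : ℚ) * ((n - j : ℕ) : ℚ) := by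
  exact_mod_cast Nat.choose_succ_right_eq n j

private lemma qsucc_mul_choose (j i : ℕ) :
    ((j:ℚ)+1) * (j.choose i : ℚ) = ((j+1).choose (i+1) : ℚ) * ((i:ℚ)+1) := by
  exact_mod_cast Nat.add_one_mul_choose_eq j i

private lemma cRec (N1 N2 : ℚ) (m n k l : ℕ) :
    ccc N1 N2 (m+1) n k l =
      ccc N1 N2 m n k l
      + (if k = 0 then 0 else ((n - (k-1) - l : ℕ) : ℚ) * N1 * ccc N1 N2 m n (k-1) l)
      + (if l = 0 then 0 else ((n - k - (l-1) : ℕ) : ℚ) * ((m - k - 2*(l-1) : ℕ) : ℚ)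
            * (N1 * N2) * ccc N1 N2 m n k (l-1)) := by
  rcases k with _ | s <;> rcases l with _ | t
  · simp [ccc]
  · -- k = 0, l = t+1
    rw [if_pos rfl, if_neg (Nat.succ_ne_zero t)]
    simp only [ccc, Nat.zero_add, Nat.add_sub_cancel, Nat.sub_zero]
    have hi : 2*(t+1) = (2*t+1)+1 := by ring
    rw [hi, Nat.choose_succ_succ]
    have e1 := qchoose_succ_right n t
    have e2 := qchoose_succ_right m (2*t)
    push_cast [Nat.factorial_succ, Nat.choose_self]
    push_cast at e1 e2
    linear_combination
      (N2 * N1^(t+1) * ((1/2*N2))^t * (m.choose (2*t+1):ℚ) * ((2*t:ℚ)+1) * (((2*t).factorial:ℚ))) * e1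
      + (N2 * N1^(t+1) * ((1/2*N2))^t * (n.choose t:ℚ) * ((n-t:ℕ):ℚ) * (((2*t).factorial:ℚ))) * e2
  · -- k = s+1, l = 0
    rw [if_neg (Nat.succ_ne_zero s), if_pos rfl]
    simp only [ccc, Nat.add_zero, Nat.mul_zero, Nat.add_sub_cancel, Nat.sub_zero,
      Nat.choose_zero_right, Nat.choose_self]
    rw [Nat.choose_succ_succ]
    have e1 := qchoose_succ_right n s
    push_cast [Nat.factorial_succ] at e1 ⊢
    linear_combination (N1^(s+1) * (m.choose s : ℚ) * ((s.factorial : ℚ))) * e1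
  · -- k = s+1, l = t+1
    rw [if_neg (Nat.succ_ne_zero s), if_neg (Nat.succ_ne_zero t)]
    simp only [ccc, Nat.add_sub_cancel]
    rw [show s+1+(t+1) = s+t+2 by omega, show s+1+2*(t+1) = s+2*t+3 by omega,
      show s+(t+1) = s+t+1 by omega, show s+2*(t+1) = s+2*t+2 by omega,
      show s+1+t = s+t+1 by omega, show s+1+2*t = s+2*t+1 by omega,
      show n - s - (t+1) = n - (s+t+1) by omega,
      show n - (s+1) - t = n - (s+t+1) by omega,
      show m - (s+1) - 2*t = m - (s+2*t+1) by omega]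
    have hEP : (((m+1).choose (s+2*t+3) : ℕ) : ℚ)
        = (m.choose (s+2*t+2) : ℚ) + (m.choose (s+2*t+3) : ℚ) := by
      have h := Nat.choose_succ_succ m (s+2*t+2)
      simp only [Nat.succ_eq_add_one] at h
      rw [show (s+2*t+2)+1 = s+2*t+3 by omega] at h
      exact_mod_cast h
    have hE1 := qchoose_succ_right n (s+t+1)
    rw [show (s+t+1)+1 = s+t+2 by omega] at hE1
    have hE2 := qchoose_succ_right m (s+2*t+1)
    rw [show (s+2*t+1)+1 = s+2*t+2 by omega] at hE2
    have hE3 := qsucc_mul_choose (s+t+1) (t+1)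
    rw [show (s+t+1)+1 = s+t+2 by omega, show (t+1)+1 = t+2 by omega] at hE3
    have hE4 := qchoose_succ_right (s+t+2) (t+1)
    rw [show (t+1)+1 = t+2 by omega, show (s+t+2) - (t+1) = s+1 by omega] at hE4
    have hE5 := qsucc_mul_choose (s+t+1) t
    rw [show (s+t+1)+1 = s+t+2 by omega] at hE5
    have hE6 : (((s+2*t+3).factorial : ℕ) : ℚ)
        = ((s:ℚ)+2*(t:ℚ)+3) * ((s+2*t+2).factorial : ℚ) := by
      have h := Nat.factorial_succ (s+2*t+2)
      rw [show (s+2*t+2)+1 = s+2*t+3 by omega] at h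
      exact_mod_cast h
    have hE7 : (((s+2*t+2).factorial : ℕ) : ℚ)
        = ((s:ℚ)+2*(t:ℚ)+2) * ((s+2*t+1).factorial : ℚ) := by
      have h := Nat.factorial_succ (s+2*t+1)
      rw [show (s+2*t+1)+1 = s+2*t+2 by omega] at h
      exact_mod_cast h
    push_cast at hE1 hE2 hE3 hE4 hE5 ⊢
    set A2 : ℚ := (n.choose (s+t+2) : ℚ)
    set A1 : ℚ := (n.choose (s+t+1) : ℚ)
    set X : ℚ := ((n - (s+t+1) : ℕ) : ℚ)
    set B2 : ℚ := (m.choose (s+2*t+2) : ℚ)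
    set B1 : ℚ := (m.choose (s+2*t+1) : ℚ)
    set Y : ℚ := ((m - (s+2*t+1) : ℕ) : ℚ)
    set D : ℚ := ((s+t+2).choose (t+1) : ℚ)
    set D1 : ℚ := ((s+t+1).choose (t+1) : ℚ)
    set D0 : ℚ := ((s+t+1).choose t : ℚ)
    set F2 : ℚ := ((s+2*t+2).factorial : ℚ)
    set F1 : ℚ := ((s+2*t+1).factorial : ℚ)
    set F3 : ℚ := ((s+2*t+3).factorial : ℚ)
    set P : ℚ := N1 ^ (s+t+2)
    set W : ℚ := (1/2 : ℚ) * N2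
    linear_combination
      (P * W^(t+1) * (A2*D*F3)) * hEP
      + (P * W^(t+1) * (A2*B2*D)) * hE6
      + (P * W^(t+1) * (B2*D1*F2 + 2*Y*B1*D0*F1)) * hE1
      + (P * W^(t+1) * (2*((s:ℚ)+(t:ℚ)+2)*A2*D0*F1)) * hE2
      - (P * W^(t+1) * (A2*B2*F2)) * hE3
      - (P * W^(t+1) * (A2*B2*F2)) * hE4
      - (P * W^(t+1) * (2*A2*B2*((s:ℚ)+2*(t:ℚ)+2)*F1)) * hE5
      + (P * W^(t+1) * (2*A2*B2*D*((t:ℚ)+1))) * hE7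

/-! ### Sum manipulation helpers -/

private lemma shift_sum {M : Type*} [AddCommMonoid M] (K : ℕ) (F : ℕ → M) (h : F (K+1) = 0) :
    ∑ k ∈ Finset.range (K+1), F (k+1)
      = ∑ k ∈ Finset.range (K+1), (if k = 0 then 0 else F k) := by
  rw [Finset.sum_range_succ, h, add_zero,
    Finset.sum_range_succ' (fun k => if k = 0 then 0 else F k) K]
  simp

private lemma box_ext {M : Type*} [AddCommMonoid M] (m : ℕ) (F : ℕ → ℕ → M)
    (h : ∀ k l, m+1 ≤ k ∨ m+1 ≤ l → F k l = 0) :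
    ∑ k ∈ Finset.range (m+1), ∑ l ∈ Finset.range (m+1), F k l
      = ∑ k ∈ Finset.range (m+2), ∑ l ∈ Finset.range (m+2), F k l := by
  rw [Finset.sum_range_succ (fun k => ∑ l ∈ Finset.range (m+2), F k l) (m+1)]
  have h1 : ∑ l ∈ Finset.range (m+2), F (m+1) l = 0 :=
    Finset.sum_eq_zero (fun l _ => h _ _ (Or.inl le_rfl))
  rw [h1, add_zero]
  refine Finset.sum_congr rfl (fun k _ => ?_)
  rw [Finset.sum_range_succ (fun l => F k l) (m+1), h _ _ (Or.inr le_rfl), add_zero]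

private lemma filter_box {M : Type*} [AddCommMonoid M] (m : ℕ) (f : ℕ × ℕ → M)
    (h : ∀ p : ℕ × ℕ, m < p.1 + 2*p.2 → f p = 0) :
    ∑ p ∈ (Finset.range (m+1) ×ˢ Finset.range (m+1)).filter (fun p => p.1 + 2*p.2 ≤ m), f p
      = ∑ k ∈ Finset.range (m+1), ∑ l ∈ Finset.range (m+1), f (k,l) := by
  rw [Finset.sum_filter, Finset.sum_product]
  refine Finset.sum_congr rfl (fun k _ => Finset.sum_congr rfl (fun l _ => ?_))
  by_cases hkl : k + 2*l ≤ m
  · rw [if_pos hkl]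
  · rw [if_neg hkl, h (k,l) (by omega)]

/-! ### Algebra commutation lemmas -/

section
variable {A : Type*} [Ring A] [Algebra ℚ A]

private lemma comm_a' (yα yβ yαβ : A) (N1 : ℚ)
    (h1 : yα * yβ - yβ * yα = -(N1 • yαβ)) (h3 : yα * yαβ - yαβ * yα = 0) :
    ∀ a : ℕ, yβ * yα ^ a = yα ^ a * yβ + ((a : ℚ) * N1) • (yα ^ (a - 1) * yαβ) := by
  have hba : yβ * yα = yα * yβ + N1 • yαβ := by
    linear_combination (norm := noncomm_ring) -h1
  have hab : yαβ * yα = yα * yαβ := by linear_combination (norm := noncomm_ring) -h3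
  intro a
  induction a with
  | zero => simp
  | succ a ih =>
    rw [pow_succ, ← mul_assoc, ih]
    rcases a with _ | b
    · simp [hba]
    · have hp : yα ^ (b + 1 - 1) * yαβ * yα = yα ^ (b + 1) * yαβ := by
        rw [Nat.add_sub_cancel, mul_assoc, hab, ← mul_assoc, ← pow_succ]
      rw [add_mul, smul_mul_assoc, hp, mul_assoc, hba, Nat.add_sub_cancel]
      rw [mul_add, ← mul_assoc, ← pow_succ]
      push_cast
      rw [mul_smul_comm]
      match_scalars <;> ring

private lemma comm_b' (yβ yαβ yα2β : A) (N2 : ℚ)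
    (h2 : yβ * yαβ - yαβ * yβ = -(N2 • yα2β)) (hz2 : yα2β * yβ = yβ * yα2β) :
    ∀ b : ℕ, yαβ * yβ ^ b = yβ ^ b * yαβ + ((b : ℚ) * N2) • (yβ ^ (b - 1) * yα2β) := by
  have hba : yαβ * yβ = yβ * yαβ + N2 • yα2β := by
    linear_combination (norm := noncomm_ring) -h2
  intro b
  induction b with
  | zero => simp
  | succ b ih =>
    rw [pow_succ, ← mul_assoc, ih]
    rcases b with _ | c
    · simp [hba]
    · have hp : yβ ^ (c + 1 - 1) * yα2β * yβ = yβ ^ (c + 1) * yα2β := by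
        rw [Nat.add_sub_cancel, mul_assoc, hz2, ← mul_assoc, ← pow_succ]
      rw [add_mul, smul_mul_assoc, hp, mul_assoc, hba, Nat.add_sub_cancel]
      rw [mul_add, ← mul_assoc, ← pow_succ]
      push_cast
      rw [mul_smul_comm]
      match_scalars <;> ring

private lemma z_comm_ab' (yαβ yα2β : A) (hz3 : yα2β * yαβ = yαβ * yα2β) :
    ∀ k : ℕ, yα2β * yαβ ^ k = yαβ ^ k * yα2β := by
  intro k
  induction k with
  | zero => simp
  | succ k ih => rw [pow_succ, ← mul_assoc, ih, mul_assoc, hz3, ← mul_assoc]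

private lemma step_mul' (yα yβ yαβ yα2β : A) (N1 N2 : ℚ)
    (comm_a : ∀ a : ℕ, yβ * yα ^ a = yα ^ a * yβ + ((a : ℚ) * N1) • (yα ^ (a - 1) * yαβ))
    (comm_b : ∀ b : ℕ, yαβ * yβ ^ b = yβ ^ b * yαβ + ((b : ℚ) * N2) • (yβ ^ (b - 1) * yα2β))
    (z_comm : ∀ k : ℕ, yα2β * yαβ ^ k = yαβ ^ k * yα2β)
    (a b k l : ℕ) :
    yβ * (yα ^ a * yβ ^ b * yαβ ^ k * yα2β ^ l) =
      yα ^ a * yβ ^ (b + 1) * yαβ ^ k * yα2β ^ l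
      + ((a : ℚ) * N1) • (yα ^ (a - 1) * yβ ^ b * yαβ ^ (k + 1) * yα2β ^ l)
      + ((a : ℚ) * (b : ℚ) * (N1 * N2)) •
          (yα ^ (a - 1) * yβ ^ (b - 1) * yαβ ^ k * yα2β ^ (l + 1)) := by
  have key : yαβ * (yβ ^ b * yαβ ^ k * yα2β ^ l)
      = yβ ^ b * yαβ ^ (k+1) * yα2β ^ l
        + ((b : ℚ) * N2) • (yβ ^ (b-1) * yαβ ^ k * yα2β ^ (l+1)) := by
    calc yαβ * (yβ ^ b * yαβ ^ k * yα2β ^ l)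
        = (yαβ * yβ ^ b) * yαβ ^ k * yα2β ^ l := by noncomm_ring
      _ = (yβ ^ b * yαβ + ((b : ℚ) * N2) • (yβ ^ (b - 1) * yα2β)) * yαβ ^ k * yα2β ^ l := by
          rw [comm_b]
      _ = yβ ^ b * (yαβ * yαβ ^ k) * yα2β ^ l
          + ((b : ℚ) * N2) • (yβ ^ (b-1) * (yα2β * yαβ ^ k) * yα2β ^ l) := by
          simp only [add_mul, smul_mul_assoc]; noncomm_ring
      _ = yβ ^ b * yαβ ^ (k+1) * yα2β ^ l
          + ((b : ℚ) * N2) • (yβ ^ (b-1) * yαβ ^ k * (yα2β * yα2β ^ l)) := by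
          rw [← pow_succ', z_comm]; noncomm_ring
      _ = _ := by rw [← pow_succ']
  calc yβ * (yα ^ a * yβ ^ b * yαβ ^ k * yα2β ^ l)
      = (yβ * yα ^ a) * (yβ ^ b * yαβ ^ k * yα2β ^ l) := by noncomm_ring
    _ = (yα ^ a * yβ + ((a : ℚ) * N1) • (yα ^ (a - 1) * yαβ))
          * (yβ ^ b * yαβ ^ k * yα2β ^ l) := by rw [comm_a]
    _ = yα ^ a * ((yβ * yβ ^ b) * yαβ ^ k * yα2β ^ l)
        + ((a : ℚ) * N1) • (yα ^ (a-1) * (yαβ * (yβ ^ b * yαβ ^ k * yα2β ^ l))) := by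
        simp only [add_mul, smul_mul_assoc]; noncomm_ring
    _ = yα ^ a * (yβ ^ (b+1) * yαβ ^ k * yα2β ^ l)
        + ((a : ℚ) * N1) • (yα ^ (a-1) * (yβ ^ b * yαβ ^ (k+1) * yα2β ^ l
            + ((b : ℚ) * N2) • (yβ ^ (b-1) * yαβ ^ k * yα2β ^ (l+1)))) := by
        rw [← pow_succ', key]
    _ = _ := by
        rw [mul_add, mul_smul_comm, smul_add, smul_smul]
        rw [show yα ^ a * (yβ ^ (b+1) * yαβ ^ k * yα2β ^ l)
              = yα ^ a * yβ ^ (b+1) * yαβ ^ k * yα2β ^ l from by noncomm_ring,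
          show yα ^ (a-1) * (yβ ^ b * yαβ ^ (k+1) * yα2β ^ l)
              = yα ^ (a-1) * yβ ^ b * yαβ ^ (k+1) * yα2β ^ l from by noncomm_ring,
          show yα ^ (a-1) * (yβ ^ (b-1) * yαβ ^ k * yα2β ^ (l+1))
              = yα ^ (a-1) * yβ ^ (b-1) * yαβ ^ k * yα2β ^ (l+1) from by noncomm_ring,
          show (a:ℚ) * N1 * ((b:ℚ) * N2) = (a:ℚ)*(b:ℚ)*(N1*N2) from by ring,
          add_assoc]

end

/-- Lemma 3 (case (III), nonnegative exponents): in an associative `ℚ`-algebra (such as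
`U(n⁻)`), suppose `[y_α, y_β] = -N_{α,β} y_{α+β}`, `[y_β, y_{α+β}] = -N_{β,α+β} y_{α+2β}`,
`[y_α, y_{α+β}] = 0`, and `y_{α+2β}` is central among these elements.  Then for `m, n ≥ 0`,
`y_β^m y_α^n = Σ_{k,l ≥ 0, k+2l ≤ m} c_{k,l}^{m,n} y_α^{n-k-l} y_β^{m-k-2l} y_{α+β}^k y_{α+2β}^l`
with `c_{k,l}^{m,n} = N_{α,β}^{k+l} ((1/2) N_{β,α+β})^l C(n,k+l) C(m,k+2l) C(k+l,l) (k+2l)!`. -/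
theorem ybeta_pow_mul_yalpha_pow_caseIII {A : Type*} [Ring A] [Algebra ℚ A]
    (yα yβ yαβ yα2β : A) (N1 N2 : ℚ)
    (h1 : yα * yβ - yβ * yα = -(N1 • yαβ))
    (h2 : yβ * yαβ - yαβ * yβ = -(N2 • yα2β))
    (h3 : yα * yαβ - yαβ * yα = 0)
    (hz1 : yα2β * yα = yα * yα2β) (hz2 : yα2β * yβ = yβ * yα2β)
    (hz3 : yα2β * yαβ = yαβ * yα2β) :
    ∀ m n : ℕ,
      yβ ^ m * yα ^ n =
        ∑ p ∈ (Finset.range (m + 1) ×ˢ Finset.range (m + 1)).filter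
              (fun p => p.1 + 2 * p.2 ≤ m),
          ((N1 ^ (p.1 + p.2) * ((1/2 : ℚ) * N2) ^ p.2 *
              (n.choose (p.1 + p.2) : ℚ) * (m.choose (p.1 + 2 * p.2) : ℚ) *
              ((p.1 + p.2).choose p.2 : ℚ) * ((p.1 + 2 * p.2).factorial : ℚ)) •
            (yα ^ (n - p.1 - p.2) * yβ ^ (m - p.1 - 2 * p.2) *
              yαβ ^ p.1 * yα2β ^ p.2)) := by
  have ca := comm_a' yα yβ yαβ N1 h1 h3
  have cb := comm_b' yβ yαβ yα2β N2 h2 hz2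
  have cz := z_comm_ab' yαβ yα2β hz3
  intro m n
  -- restate with ccc
  have main : ∀ m : ℕ, yβ ^ m * yα ^ n =
      ∑ k ∈ Finset.range (m+1), ∑ l ∈ Finset.range (m+1),
        ccc N1 N2 m n k l • (yα ^ (n-k-l) * yβ ^ (m-k-2*l) * yαβ ^ k * yα2β ^ l) := by
    intro m
    induction m with
    | zero =>
      simp [ccc, Finset.range_one]
    | succ m ih =>
      have point : ∀ k l : ℕ,
          yβ * (ccc N1 N2 m n k l • (yα ^ (n-k-l) * yβ ^ (m-k-2*l) * yαβ ^ k * yα2β ^ l))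
          = ccc N1 N2 m n k l • (yα ^ (n-k-l) * yβ ^ ((m+1)-k-2*l) * yαβ ^ k * yα2β ^ l)
            + (((n-k-l : ℕ):ℚ) * N1 * ccc N1 N2 m n k l) •
                (yα ^ (n-(k+1)-l) * yβ ^ ((m+1)-(k+1)-2*l) * yαβ ^ (k+1) * yα2β ^ l)
            + (((n-k-l : ℕ):ℚ) * ((m-k-2*l : ℕ):ℚ) * (N1*N2) * ccc N1 N2 m n k l) •
                (yα ^ (n-k-(l+1)) * yβ ^ ((m+1)-k-2*(l+1)) * yαβ ^ k * yα2β ^ (l+1)) := by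
        intro k l
        by_cases hkl : k + 2*l ≤ m
        · rw [mul_smul_comm, step_mul' yα yβ yαβ yα2β N1 N2 ca cb cz (n-k-l) (m-k-2*l) k l]
          rw [show yα ^ ((n-k-l)-1) * yβ ^ ((m-k-2*l)-1) * yαβ ^ k * yα2β ^ (l+1)
                = yα ^ (n-k-(l+1)) * yβ ^ ((m+1)-k-2*(l+1)) * yαβ ^ k * yα2β ^ (l+1) from by
                rw [show (n-k-l)-1 = n-k-(l+1) by omega,
                  show (m-k-2*l)-1 = (m+1)-k-2*(l+1) by omega],
              show yβ ^ ((m-k-2*l)+1) = yβ ^ ((m+1)-k-2*l) from by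
                rw [show (m-k-2*l)+1 = (m+1)-k-2*l by omega],
              show yα ^ ((n-k-l)-1) = yα ^ (n-(k+1)-l) from by
                rw [show (n-k-l)-1 = n-(k+1)-l by omega],
              show (yβ ^ (m-k-2*l) : A) = yβ ^ ((m+1)-(k+1)-2*l) from by
                rw [show m-k-2*l = (m+1)-(k+1)-2*l by omega]]
          simp only [smul_add, smul_smul]
          match_scalars <;> ring
        · have hc : ccc N1 N2 m n k l = 0 := ccc_zero _ _ _ _ _ _ (by omega)
          simp [hc]
      -- step 1: express LHS as a sum over the bigger box
      have hbig : yβ ^ (m+1) * yα ^ n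
          = ∑ k ∈ Finset.range (m+2), ∑ l ∈ Finset.range (m+2),
              yβ * (ccc N1 N2 m n k l •
                (yα ^ (n-k-l) * yβ ^ (m-k-2*l) * yαβ ^ k * yα2β ^ l)) := by
        rw [pow_succ', mul_assoc, ih,
          box_ext m _ (fun k l h => by
            rw [ccc_zero N1 N2 m n k l (by omega), zero_smul]),
          Finset.mul_sum]
        exact Finset.sum_congr rfl fun k _ => Finset.mul_sum _ _ _
      -- reindexing lemma for the yαβ-shifted sum
      have hS2 : ∑ k ∈ Finset.range (m+2), ∑ l ∈ Finset.range (m+2),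
            (((n-k-l : ℕ):ℚ) * N1 * ccc N1 N2 m n k l) •
              (yα ^ (n-(k+1)-l) * yβ ^ ((m+1)-(k+1)-2*l) * yαβ ^ (k+1) * yα2β ^ l)
          = ∑ k ∈ Finset.range (m+2), ∑ l ∈ Finset.range (m+2),
            (if k = 0 then 0 else ((n-(k-1)-l : ℕ):ℚ) * N1 * ccc N1 N2 m n (k-1) l) •
              (yα ^ (n-k-l) * yβ ^ ((m+1)-k-2*l) * yαβ ^ k * yα2β ^ l) := by
        rw [show m+2 = m+1+1 by omega]
        calc ∑ k ∈ Finset.range (m+1+1), ∑ l ∈ Finset.range (m+1+1),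
              (((n-k-l : ℕ):ℚ) * N1 * ccc N1 N2 m n k l) •
                (yα ^ (n-(k+1)-l) * yβ ^ ((m+1)-(k+1)-2*l) * yαβ ^ (k+1) * yα2β ^ l)
            = ∑ k ∈ Finset.range (m+1+1), (fun k => ∑ l ∈ Finset.range (m+1+1),
                (((n-(k-1)-l : ℕ):ℚ) * N1 * ccc N1 N2 m n (k-1) l) •
                  (yα ^ (n-k-l) * yβ ^ ((m+1)-k-2*l) * yαβ ^ k * yα2β ^ l)) (k+1) := by
              refine Finset.sum_congr rfl fun k _ => ?_
              simp only [Nat.add_sub_cancel]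
          _ = ∑ k ∈ Finset.range (m+1+1), (if k = 0 then 0 else
                ∑ l ∈ Finset.range (m+1+1),
                  (((n-(k-1)-l : ℕ):ℚ) * N1 * ccc N1 N2 m n (k-1) l) •
                    (yα ^ (n-k-l) * yβ ^ ((m+1)-k-2*l) * yαβ ^ k * yα2β ^ l)) := by
              exact shift_sum (m+1)
                (fun k => ∑ l ∈ Finset.range (m+1+1),
                  (((n-(k-1)-l : ℕ):ℚ) * N1 * ccc N1 N2 m n (k-1) l) •
                    (yα ^ (n-k-l) * yβ ^ ((m+1)-k-2*l) * yαβ ^ k * yα2β ^ l))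
                (Finset.sum_eq_zero fun l _ => by
                  simp only [Nat.add_sub_cancel]
                  rw [ccc_zero N1 N2 m n (m+1) l (by omega)]
                  simp)
          _ = _ := by
              refine Finset.sum_congr rfl fun k _ => ?_
              rcases k with _ | s
              · simp
              · simp only [if_neg (Nat.succ_ne_zero s)]
      -- reindexing lemma for the yα2β-shifted sum
      have hS3 : ∑ k ∈ Finset.range (m+2), ∑ l ∈ Finset.range (m+2),
            (((n-k-l : ℕ):ℚ) * ((m-k-2*l : ℕ):ℚ) * (N1*N2) * ccc N1 N2 m n k l) •
              (yα ^ (n-k-(l+1)) * yβ ^ ((m+1)-k-2*(l+1)) * yαβ ^ k * yα2β ^ (l+1))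
          = ∑ k ∈ Finset.range (m+2), ∑ l ∈ Finset.range (m+2),
            (if l = 0 then 0 else ((n-k-(l-1) : ℕ):ℚ) * ((m-k-2*(l-1) : ℕ):ℚ)
                * (N1*N2) * ccc N1 N2 m n k (l-1)) •
              (yα ^ (n-k-l) * yβ ^ ((m+1)-k-2*l) * yαβ ^ k * yα2β ^ l) := by
        refine Finset.sum_congr rfl fun k _ => ?_
        rw [show m+2 = m+1+1 by omega]
        calc ∑ l ∈ Finset.range (m+1+1),
              (((n-k-l : ℕ):ℚ) * ((m-k-2*l : ℕ):ℚ) * (N1*N2) * ccc N1 N2 m n k l) •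
                (yα ^ (n-k-(l+1)) * yβ ^ ((m+1)-k-2*(l+1)) * yαβ ^ k * yα2β ^ (l+1))
            = ∑ l ∈ Finset.range (m+1+1), (fun l =>
                (((n-k-(l-1) : ℕ):ℚ) * ((m-k-2*(l-1) : ℕ):ℚ)
                    * (N1*N2) * ccc N1 N2 m n k (l-1)) •
                  (yα ^ (n-k-l) * yβ ^ ((m+1)-k-2*l) * yαβ ^ k * yα2β ^ l)) (l+1) := by
              refine Finset.sum_congr rfl fun l _ => ?_
              simp only [Nat.add_sub_cancel]
          _ = ∑ l ∈ Finset.range (m+1+1), (if l = 0 then 0 else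
                (((n-k-(l-1) : ℕ):ℚ) * ((m-k-2*(l-1) : ℕ):ℚ)
                    * (N1*N2) * ccc N1 N2 m n k (l-1)) •
                  (yα ^ (n-k-l) * yβ ^ ((m+1)-k-2*l) * yαβ ^ k * yα2β ^ l)) := by
              exact shift_sum (m+1)
                (fun l => (((n-k-(l-1) : ℕ):ℚ) * ((m-k-2*(l-1) : ℕ):ℚ)
                    * (N1*N2) * ccc N1 N2 m n k (l-1)) •
                  (yα ^ (n-k-l) * yβ ^ ((m+1)-k-2*l) * yαβ ^ k * yα2β ^ l))
                (by
                  simp only [Nat.add_sub_cancel]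
                  rw [ccc_zero N1 N2 m n k (m+1) (by omega)]
                  simp)
          _ = _ := by
              refine Finset.sum_congr rfl fun l _ => ?_
              rcases l with _ | t
              · simp
              · simp only [if_neg (Nat.succ_ne_zero t)]
      rw [show m+1+1 = m+2 by omega]
      calc yβ ^ (m+1) * yα ^ n
          = ∑ k ∈ Finset.range (m+2), ∑ l ∈ Finset.range (m+2),
              yβ * (ccc N1 N2 m n k l •
                (yα ^ (n-k-l) * yβ ^ (m-k-2*l) * yαβ ^ k * yα2β ^ l)) := hbig
        _ = ∑ k ∈ Finset.range (m+2), ∑ l ∈ Finset.range (m+2),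
              (ccc N1 N2 m n k l •
                  (yα ^ (n-k-l) * yβ ^ ((m+1)-k-2*l) * yαβ ^ k * yα2β ^ l)
                + (((n-k-l : ℕ):ℚ) * N1 * ccc N1 N2 m n k l) •
                  (yα ^ (n-(k+1)-l) * yβ ^ ((m+1)-(k+1)-2*l) * yαβ ^ (k+1) * yα2β ^ l)
                + (((n-k-l : ℕ):ℚ) * ((m-k-2*l : ℕ):ℚ) * (N1*N2) * ccc N1 N2 m n k l) •
                  (yα ^ (n-k-(l+1)) * yβ ^ ((m+1)-k-2*(l+1)) * yαβ ^ k * yα2β ^ (l+1))) :=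
            Finset.sum_congr rfl fun k _ => Finset.sum_congr rfl fun l _ => point k l
        _ = (∑ k ∈ Finset.range (m+2), ∑ l ∈ Finset.range (m+2),
              ccc N1 N2 m n k l •
                (yα ^ (n-k-l) * yβ ^ ((m+1)-k-2*l) * yαβ ^ k * yα2β ^ l))
            + (∑ k ∈ Finset.range (m+2), ∑ l ∈ Finset.range (m+2),
              (((n-k-l : ℕ):ℚ) * N1 * ccc N1 N2 m n k l) •
                (yα ^ (n-(k+1)-l) * yβ ^ ((m+1)-(k+1)-2*l) * yαβ ^ (k+1) * yα2β ^ l))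
            + (∑ k ∈ Finset.range (m+2), ∑ l ∈ Finset.range (m+2),
              (((n-k-l : ℕ):ℚ) * ((m-k-2*l : ℕ):ℚ) * (N1*N2) * ccc N1 N2 m n k l) •
                (yα ^ (n-k-(l+1)) * yβ ^ ((m+1)-k-2*(l+1)) * yαβ ^ k * yα2β ^ (l+1))) := by
            simp only [Finset.sum_add_distrib]
        _ = ∑ k ∈ Finset.range (m+2), ∑ l ∈ Finset.range (m+2),
              ccc N1 N2 (m+1) n k l •
                (yα ^ (n-k-l) * yβ ^ ((m+1)-k-2*l) * yαβ ^ k * yα2β ^ l) := by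
            rw [hS2, hS3]
            simp only [← Finset.sum_add_distrib]
            refine Finset.sum_congr rfl fun k _ => Finset.sum_congr rfl fun l _ => ?_
            rw [← add_smul, ← add_smul, ← cRec]
  rw [main m, filter_box m _ (fun p hp => by
    have hc := ccc_zero N1 N2 m n p.1 p.2 hp
    simp only [ccc] at hc
    rw [hc, zero_smul])]
  rfl
end

section
/- Let g be a semisimple Lie algebra, λ ∈ ℚP, and α_i a simple root with h = ⟨λ, α_i^∨⟩ a positive integer. Then in the Verma module M(λ), the vector y_i^h · v_λ is singular, i.e., x_j · (y_i^h · v_λ) = 0 for all positive roots α_j. -/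
/-!
In `U(L)` the relations `[x_i, y_i] = h_i` and `[h_i, y_i] = -2 y_i` give
`x_i y_iⁿ⁺¹ = y_iⁿ⁺¹ x_i + (n + 1) y_iⁿ (h_i - n)`. Applied to the highest weight vector,
on which `x_i` vanishes and `h_i` acts by `h - 1`, this kills `y_i^h v_λ`. Every other simple `x_k`
commutes with `y_i` and so kills it too. Finally, the elements of `L` annihilating a fixed vector
of a `U(L)`-module form a Lie subalgebra, and the simple `x_k` generate all the `x_j`.
-/

open UniversalEnvelopingAlgebra

section Sl2Relations

variable {A : Type*} [Ring A] {X Y H : A}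

theorem mul_pow_succ_eq_pow_succ_mul_add (hXY : X * Y = Y * X + H) (hHY : H * Y = Y * (H - 2))
    (n : ℕ) :
    X * Y ^ (n + 1) = Y ^ (n + 1) * X + (n + 1 : A) * Y ^ n * (H - n) := by
  induction n with
  | zero => simpa using hXY
  | succ n ih =>
    calc X * Y ^ (n + 1 + 1)
        = Y ^ (n + 1) * (X * Y) + (n + 1 : A) * Y ^ n * (H * Y - n * Y) := by
          rw [pow_succ _ (n + 1), ← mul_assoc, ih]; noncomm_ring
      _ = Y ^ (n + 1 + 1) * X + ((n + 1 : ℕ) + 1 : A) * Y ^ (n + 1) * (H - (n + 1 : ℕ)) := by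
          rw [hXY, hHY]
          push_cast
          simp only [← nsmul_one]
          noncomm_ring
          module

theorem smul_pow_smul_eq_zero {M : Type*} [AddCommGroup M] [Module A M]
    (hXY : X * Y = Y * X + H) (hHY : H * Y = Y * (H - 2)) {v : M} (hXv : X • v = 0) (n : ℕ)
    (hHv : H • v = ((n : A) - 1) • v) : X • (Y ^ n • v) = 0 := by
  cases n with
  | zero => simpa using hXv
  | succ n =>
    rw [← mul_smul, mul_pow_succ_eq_pow_succ_mul_add hXY hHY, add_smul, mul_smul, hXv,
      smul_zero, zero_add, mul_smul _ (H - _), sub_smul, hHv]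
    push_cast
    rw [add_sub_cancel_right, sub_self, smul_zero]

end Sl2Relations

namespace UniversalEnvelopingAlgebra

variable {R L : Type*} [CommRing R] [LieRing L] [LieAlgebra R L]
  {M : Type*} [AddCommGroup M] [Module (UniversalEnvelopingAlgebra R L) M]

theorem ι_mul_ι (a b : L) : ι R a * ι R b = ι R b * ι R a + ι R ⁅a, b⁆ := by
  -- the commutator bracket through which `ι` is a Lie hom is only a local instance in Mathlib
  let := LieRing.ofAssociativeRing (A := UniversalEnvelopingAlgebra R L)
  rw [LieHom.map_lie, Ring.lie_def]; abel

variable (R L) in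
def annihilatorLieSubalgebra (m : M) : LieSubalgebra R L where
  carrier := {z | ι R z • m = 0}
  add_mem' {p q} hp hq := by simp_all [add_smul]
  zero_mem' := by simp
  smul_mem' c p hp := by simp_all [Algebra.smul_def, mul_smul]
  lie_mem' {p q} hp hq := by
    rw [Set.mem_ofPred_eq, eq_sub_of_add_eq' (ι_mul_ι p q).symm, sub_smul, mul_smul, mul_smul,
      hp, hq, smul_zero, smul_zero, sub_zero]

theorem mem_annihilatorLieSubalgebra {m : M} {z : L} :
    z ∈ annihilatorLieSubalgebra R L m ↔ ι R z • m = 0 := Iff.rfl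

theorem ι_smul_pow_smul_eq_zero_of_mem_lieSpan {κ : Type*} (e : κ → L) (i : κ) {f H : L}
    (hef : ⁅e i, f⁆ = H) (hcomm : ∀ k, k ≠ i → ⁅e k, f⁆ = 0)
    (hHf : ⁅H, f⁆ = -((2 : R) • f))
    {v : M} (hev : ∀ k, ι R (e k) • v = 0) (n : ℕ)
    (hHv : ι R H • v = ((n : UniversalEnvelopingAlgebra R L) - 1) • v) {z : L}
    (hz : z ∈ LieSubalgebra.lieSpan R L (Set.range e)) : ι R z • (ι R f ^ n • v) = 0 := by
  refine (LieSubalgebra.lieSpan_le.mpr ?_ :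
    _ ≤ annihilatorLieSubalgebra R L (ι R f ^ n • v)) hz
  rintro _ ⟨k, rfl⟩
  rw [SetLike.mem_coe, mem_annihilatorLieSubalgebra]
  rcases eq_or_ne k i with rfl | hki
  · refine smul_pow_smul_eq_zero ?_ ?_ (hev k) n hHv
    · rw [ι_mul_ι, hef]
    · rw [ι_mul_ι, hHf, map_neg, map_smul, Algebra.smul_def, map_ofNat, mul_sub,
        (Commute.ofNat_left 2 _).eq, sub_eq_add_neg, neg_mul_eq_mul_neg]
  · have hk : Commute (ι R (e k)) (ι R f) := by
      rw [commute_iff_eq, ι_mul_ι, hcomm k hki, map_zero, add_zero]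
    rw [← mul_smul, (hk.pow_right n).eq, mul_smul, hev, smul_zero]

end UniversalEnvelopingAlgebra

theorem verma_simple_singular_vector_general
    {L : Type*} [LieRing L] [LieAlgebra ℚ L]
    {s l : ℕ} (x y : Fin s → L) (hh : Fin l → L)
    (σ : Fin l → Fin s)
    (C : Fin l → Fin l → ℤ) (a : Fin l → ℚ)
    (i : Fin l) (h : ℕ) (hai : a i = (h : ℚ))
    -- Chevalley relations involving the simple root vector `y_i`
    (hCii : C i i = 2)
    (hxyi : ⁅x (σ i), y (σ i)⁆ = hh i)
    (hxyk : ∀ k : Fin l, k ≠ i → ⁅x (σ k), y (σ i)⁆ = 0)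
    (hhy : ∀ k : Fin l, ⁅hh k, y (σ i)⁆ = -((C k i : ℚ) • y (σ i)))
    -- the positive nilpotent part is generated as a Lie algebra by the simple `x`'s
    (hgen : ∀ j : Fin s,
      x j ∈ LieSubalgebra.lieSpan ℚ L (Set.range fun k : Fin l => x (σ k))) :
    ∀ j : Fin s,
      (ι ℚ (x j) : UniversalEnvelopingAlgebra ℚ L) •
        (Submodule.Quotient.mk ((ι ℚ (y (σ i)) : UniversalEnvelopingAlgebra ℚ L) ^ h) :
          UniversalEnvelopingAlgebra ℚ L ⧸
            Submodule.span (UniversalEnvelopingAlgebra ℚ L)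
              ((Set.range fun j : Fin s => (ι ℚ (x j) : UniversalEnvelopingAlgebra ℚ L)) ∪
               (Set.range fun k : Fin l =>
                 (ι ℚ (hh k) : UniversalEnvelopingAlgebra ℚ L) -
                   algebraMap ℚ (UniversalEnvelopingAlgebra ℚ L) (a k - 1)))) = 0 := by
  intro j
  rw [← mul_one (ι ℚ (y (σ i)) ^ h), ← smul_eq_mul, Submodule.Quotient.mk_smul]
  refine ι_smul_pow_smul_eq_zero_of_mem_lieSpan (fun k => x (σ k)) i hxyi hxyk ?_ ?_ h ?_ (hgen j)
  · rw [hhy, hCii, Int.cast_ofNat]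
  · intro k
    rw [← Submodule.Quotient.mk_smul, smul_eq_mul, mul_one, Submodule.Quotient.mk_eq_zero]
    exact Submodule.subset_span (Or.inl ⟨σ k, rfl⟩)
  · rw [← sub_eq_zero, ← sub_smul, ← Submodule.Quotient.mk_smul, smul_eq_mul, mul_one,
      Submodule.Quotient.mk_eq_zero]
    have hweight : ((h : UniversalEnvelopingAlgebra ℚ L) - 1) = algebraMap ℚ _ (a i - 1) := by
      rw [hai, map_sub, map_natCast, map_one]
    rw [hweight]
    exact Submodule.subset_span (Or.inr ⟨i, rfl⟩)

/-- Lemma 3.1: let `g` be a (semisimple) Lie algebra over `ℚ` with Chevalley basis data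
`x_j, y_j` (`j` indexing the positive roots, the simple ones embedded via `σ`) and
`h_k` (`k` indexing the simple roots), Cartan integers `C k j = ⟨α_j, α_k^∨⟩`.
Let `M(λ) = U(g)/J(λ)` be the Verma module of highest weight `λ = Σ a_k λ_k`, where
`J(λ)` is the left ideal generated by the `x_j` and the `h_k - (a_k - 1)`, and let
`v_λ` be the image of `1`.  If `α_i` is a simple root with `h = ⟨λ, α_i^∨⟩ = a_i`
a positive integer, then `y_i^h ⬝ v_λ` is singular:
`x_j ⬝ (y_i^h ⬝ v_λ) = 0` for all positive roots `α_j`. -/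
theorem verma_simple_singular_vector
    {L : Type*} [LieRing L] [LieAlgebra ℚ L]
    {s l : ℕ} (x y : Fin s → L) (hh : Fin l → L)
    (σ : Fin l → Fin s) (hσ : Function.Injective σ)
    (C : Fin l → Fin l → ℤ) (a : Fin l → ℚ)
    (i : Fin l) (h : ℕ) (hpos : 0 < h) (hai : a i = (h : ℚ))
    -- Chevalley relations involving the simple root vector `y_i`
    (hCii : C i i = 2)
    (hxyi : ⁅x (σ i), y (σ i)⁆ = hh i)
    (hxyk : ∀ k : Fin l, k ≠ i → ⁅x (σ k), y (σ i)⁆ = 0)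
    (hhy : ∀ k : Fin l, ⁅hh k, y (σ i)⁆ = -((C k i : ℚ) • y (σ i)))
    -- the positive nilpotent part is generated as a Lie algebra by the simple `x`'s
    (hgen : ∀ j : Fin s,
      x j ∈ LieSubalgebra.lieSpan ℚ L (Set.range fun k : Fin l => x (σ k))) :
    ∀ j : Fin s,
      (ι ℚ (x j) : UniversalEnvelopingAlgebra ℚ L) •
        (Submodule.Quotient.mk ((ι ℚ (y (σ i)) : UniversalEnvelopingAlgebra ℚ L) ^ h) :
          UniversalEnvelopingAlgebra ℚ L ⧸
            Submodule.span (UniversalEnvelopingAlgebra ℚ L)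
              ((Set.range fun j : Fin s => (ι ℚ (x j) : UniversalEnvelopingAlgebra ℚ L)) ∪
               (Set.range fun k : Fin l =>
                 (ι ℚ (hh k) : UniversalEnvelopingAlgebra ℚ L) -
                   algebraMap ℚ (UniversalEnvelopingAlgebra ℚ L) (a k - 1)))) = 0 :=
  verma_simple_singular_vector_general x y hh σ C a i h hai hCii hxyi hxyk hhy hgen
end
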